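/- Under the constraint that Σ_l B_{i,l} ∈ {0,1} for each i and Σ_i B_{i,l} = 1 for each l, the quadratic objective Σ_i ‖Σ_l B_{i,l} v_l / σ² + a_i‖² / (1/σ₀² + Σ_l B_{i,l}/σ² + m_i/σ²) decomposes as a linear function of the entries of B: it equals Σ_i ‖a_i‖²/(1/σ₀² + m_i/σ²) + Σ_{i,l} B_{i,l} [ ‖v_l/σ² + a_i‖²/(1/σ₀² + 1/σ² + m_i/σ²) - ‖a_i‖²/(1/σ₀² + m_i/σ²) ]. -/
import Mathlib


/-- Linearization of the quadratic matching objective (equation 7 of the paper). -/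
theorem stmt11 {L Lj D : ℕ} (σ σ0 : ℝ) (hσ : 0 < σ) (hσ0 : 0 < σ0)
    (v : Fin Lj → EuclideanSpace ℝ (Fin D))
    (a : Fin L → EuclideanSpace ℝ (Fin D))
    (m : Fin L → ℝ) (hm : ∀ i, 0 ≤ m i)
    (B : Matrix (Fin L) (Fin Lj) ℝ)
    (h01 : ∀ i l, B i l = 0 ∨ B i l = 1)
    (hrow : ∀ i, (∑ l, B i l) = 0 ∨ (∑ l, B i l) = 1)
    (hcol : ∀ l, ∑ i, B i l = 1) :
    ∑ i, ‖(∑ l, (B i l / σ^2) • v l) + a i‖^2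
        / (1/σ0^2 + (∑ l, B i l)/σ^2 + m i/σ^2)
      = (∑ i, ‖a i‖^2 / (1/σ0^2 + m i/σ^2))
        + ∑ i, ∑ l, B i l *
            (‖(1/σ^2) • v l + a i‖^2 / (1/σ0^2 + 1/σ^2 + m i/σ^2)
              - ‖a i‖^2 / (1/σ0^2 + m i/σ^2)) := by
  rw [← Finset.sum_add_distrib]
  apply Finset.sum_congr rfl
  intro i _
  have hnn : ∀ l ∈ (Finset.univ : Finset (Fin Lj)), 0 ≤ B i l := by
    intro l _
    rcases h01 i l with h | h <;> simp [h]
  rcases hrow i with h0 | h1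
  · have hz : ∀ l, B i l = 0 := by
      intro l
      exact (Finset.sum_eq_zero_iff_of_nonneg hnn).mp h0 l (Finset.mem_univ l)
    simp [hz, h0]
  · obtain ⟨l₀, -, hl₀⟩ :=
      Finset.exists_ne_zero_of_sum_ne_zero (s := Finset.univ) (f := B i)
        (by rw [h1]; norm_num)
    have h1' : B i l₀ = 1 := (h01 i l₀).resolve_left hl₀
    have hz : ∀ l, l ≠ l₀ → B i l = 0 := by
      intro l hl
      have hsplit : B i l₀ + ∑ x ∈ Finset.univ.erase l₀, B i x = 1 := by
        rw [Finset.add_sum_erase _ _ (Finset.mem_univ l₀)]; exact h1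
      have hrest : ∑ x ∈ Finset.univ.erase l₀, B i x = 0 := by
        rw [h1'] at hsplit; linarith
      exact (Finset.sum_eq_zero_iff_of_nonneg (fun x _ => hnn x (Finset.mem_univ x))).mp
        hrest l (Finset.mem_erase.mpr ⟨hl, Finset.mem_univ l⟩)
    have hv : (∑ l, (B i l / σ^2) • v l) = (1/σ^2) • v l₀ := by
      rw [Finset.sum_eq_single l₀ (fun l _ hl => by simp [hz l hl])
        (fun h => absurd (Finset.mem_univ l₀) h)]
      rw [h1']
    have hs : (∑ l, B i l *
        (‖(1/σ^2) • v l + a i‖^2 / (1/σ0^2 + 1/σ^2 + m i/σ^2)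
          - ‖a i‖^2 / (1/σ0^2 + m i/σ^2)))
        = ‖(1/σ^2) • v l₀ + a i‖^2 / (1/σ0^2 + 1/σ^2 + m i/σ^2)
          - ‖a i‖^2 / (1/σ0^2 + m i/σ^2) := by
      rw [Finset.sum_eq_single l₀ (fun l _ hl => by simp [hz l hl])
        (fun h => absurd (Finset.mem_univ l₀) h), h1', one_mul]
    rw [hv, hs, h1]
    ring
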